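/- There exists a 16×16 matrix W over the Gaussian integers ℤ[i] with every entry in {0, 1, −1, i, −i} such that W·W* = 6·I, where W* is the conjugate transpose, and the support matrix A of W (the (0,1)-matrix with A_{ij} = 1 iff W_{ij} ≠ 0) is the adjacency matrix of a strongly regular graph SRG(16,6,2,2); that is, a strongly regular graph with parameters (16,6,2,2) admits a quasi-balanced signing over the fourth roots of unity. -/

import Mathlib

open Matrix

/-- The all-ones matrix. -/
def allOnes (ι : Type*) : Matrix ι ι ℤ := Matrix.of fun _ _ => 1

/-- `A` is the adjacency matrix of a strongly regular graph with parameters `(v, k, l, mu)`. -/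
def IsSRGAdj {ι : Type*} [Fintype ι] [DecidableEq ι]
    (A : Matrix ι ι ℤ) (k l mu : ℤ) : Prop :=
  A.IsSymm ∧ (∀ i, A i i = 0) ∧ (∀ i j, A i j = 0 ∨ A i j = 1) ∧
    A * A = k • (1 : Matrix ι ι ℤ) + l • A + mu • (allOnes ι - 1 - A)

/-!
The rook's graph `K₄ □ K₄` is an SRG(16, 6, 2, 2), and its adjacency matrix is the Kronecker sum
`(J - I) ⊗ I + I ⊗ (J - I)`. Signing it as the Kronecker sum `W = H ⊗ I + I ⊗ C` of a Hermitian
conference matrix `H` (off-diagonal entries `1, ±i`) and a skew-symmetric conference matrix `C`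
of order 4 gives `W W* = H H* ⊗ I + I ⊗ C C* + H ⊗ (C* + C) = 3 I + 3 I`: the cross terms cancel
because `C* = -C`. As `H` and `C` vanish exactly on the diagonal, `W` has the support of the
rook's graph.
-/

open scoped Kronecker

section KroneckerSum

variable {R m n : Type*} [DecidableEq m] [DecidableEq n]

def kroneckerSum [Semiring R] (H : Matrix m m R) (C : Matrix n n R) : Matrix (m × n) (m × n) R :=
  H ⊗ₖ 1 + 1 ⊗ₖ C

theorem kroneckerSum_apply_of_diag_eq_zero [Semiring R] {H : Matrix m m R} (hH : ∀ a, H a a = 0)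
    (C : Matrix n n R) (a a' : m) (b b' : n) :
    kroneckerSum H C (a, b) (a', b') =
      if a = a' then C b b' else if b = b' then H a a' else 0 := by
  by_cases ha : a = a' <;> by_cases hb : b = b' <;> simp [kroneckerSum, one_apply, ha, hb, hH]

theorem kroneckerSum_apply_eq_zero_iff [Semiring R] {H : Matrix m m R}
    {C : Matrix n n R} (hH : ∀ a a', H a a' = 0 ↔ a = a') (hC : ∀ b b', C b b' = 0 ↔ b = b')
    (x y : m × n) : kroneckerSum H C x y = 0 ↔ (x.1 = y.1 ↔ x.2 = y.2) := by
  obtain ⟨a, b⟩ := x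
  obtain ⟨a', b'⟩ := y
  rw [kroneckerSum_apply_of_diag_eq_zero (fun a => (hH a a).2 rfl)]
  by_cases ha : a = a' <;> by_cases hb : b = b' <;> simp [ha, hb, hH, hC]

theorem conjTranspose_kroneckerSum [CommSemiring R] [StarRing R] (H : Matrix m m R)
    (C : Matrix n n R) :
    (kroneckerSum H C)ᴴ = kroneckerSum Hᴴ Cᴴ := by
  simp [kroneckerSum, conjTranspose_kronecker]

theorem kroneckerSum_mul_kroneckerSum [CommSemiring R] [Fintype m] [Fintype n]
    (H H' : Matrix m m R) (C C' : Matrix n n R) :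
    kroneckerSum H C * kroneckerSum H' C' =
      kroneckerSum (H * H') (C * C') + H ⊗ₖ C' + H' ⊗ₖ C := by
  simp only [kroneckerSum, add_mul, mul_add, ← mul_kronecker_mul, one_mul, mul_one]
  abel

theorem kroneckerSum_smul_one [CommSemiring R] (h c : R) :
    kroneckerSum (h • 1 : Matrix m m R) (c • 1 : Matrix n n R) = (h + c) • 1 := by
  simp [kroneckerSum, smul_kronecker, kronecker_smul, add_smul]

theorem kroneckerSum_mul_conjTranspose_self [CommRing R] [StarRing R] [Fintype m] [Fintype n]
    {H : Matrix m m R} {C : Matrix n n R} (hH : H.IsHermitian) (hC : Cᴴ = -C) :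
    kroneckerSum H C * (kroneckerSum H C)ᴴ = kroneckerSum (H * Hᴴ) (C * Cᴴ) := by
  rw [conjTranspose_kroneckerSum, kroneckerSum_mul_kroneckerSum, hH.eq, hC, add_assoc,
    ← kronecker_add, neg_add_cancel, kronecker_zero, add_zero]

end KroneckerSum

section Rook

variable {ι : Type*}

theorem allOnes_mul_allOnes [Fintype ι] :
    allOnes ι * allOnes ι = (Fintype.card ι : ℤ) • allOnes ι := by
  ext i j; simp [allOnes, mul_apply]

theorem allOnes_kronecker_allOnes {κ : Type*} : allOnes ι ⊗ₖ allOnes κ = allOnes (ι × κ) := by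
  ext i j; simp [allOnes]

theorem allOnes_sub_one_apply [DecidableEq ι] (a b : ι) :
    (allOnes ι - 1) a b = if a = b then 0 else 1 := by
  by_cases h : a = b <;> simp [allOnes, one_apply, h]

theorem allOnes_sub_one_apply_eq_zero_iff [DecidableEq ι] (a b : ι) :
    (allOnes ι - 1) a b = 0 ↔ a = b := by
  rw [allOnes_sub_one_apply]
  split_ifs <;> simp [*]

theorem allOnes_sub_one_mul_self [Fintype ι] [DecidableEq ι] :
    (allOnes ι - 1) * (allOnes ι - 1) =
      ((Fintype.card ι : ℤ) - 2) • (allOnes ι - 1) + ((Fintype.card ι : ℤ) - 1) • 1 := by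
  simp only [sub_mul, mul_sub, allOnes_mul_allOnes, mul_one, one_mul]
  module

def rookAdj (ι : Type*) [DecidableEq ι] : Matrix (ι × ι) (ι × ι) ℤ :=
  kroneckerSum (allOnes ι - 1) (allOnes ι - 1)

theorem rookAdj_apply_eq_zero_iff [DecidableEq ι] (x y : ι × ι) :
    rookAdj ι x y = 0 ↔ (x.1 = y.1 ↔ x.2 = y.2) :=
  kroneckerSum_apply_eq_zero_iff allOnes_sub_one_apply_eq_zero_iff
    allOnes_sub_one_apply_eq_zero_iff x y

theorem rookAdj_apply [DecidableEq ι] (a a' b b' : ι) :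
    rookAdj ι (a, b) (a', b') =
      if a = a' then (if b = b' then 0 else 1) else if b = b' then 1 else 0 := by
  rw [rookAdj, kroneckerSum_apply_of_diag_eq_zero
    (fun a => (allOnes_sub_one_apply_eq_zero_iff a a).2 rfl),
    allOnes_sub_one_apply, allOnes_sub_one_apply]
  split_ifs <;> simp_all

theorem isSRGAdj_rookAdj [Fintype ι] [DecidableEq ι] :
    IsSRGAdj (rookAdj ι)
      (2 * ((Fintype.card ι : ℤ) - 1)) ((Fintype.card ι : ℤ) - 2) 2 := by
  refine ⟨IsSymm.ext ?_, ?_, ?_, ?_⟩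
  · rintro ⟨a, b⟩ ⟨a', b'⟩
    simp only [rookAdj_apply, eq_comm]
  · rintro ⟨a, b⟩
    simp [rookAdj_apply]
  · rintro ⟨a, b⟩ ⟨a', b'⟩
    rw [rookAdj_apply]
    split_ifs <;> simp
  · set B := allOnes ι - 1
    have hJ : allOnes (ι × ι) = B ⊗ₖ B + kroneckerSum B B + 1 := by
      rw [← allOnes_kronecker_allOnes, ← sub_add_cancel (allOnes ι) 1, kroneckerSum,
        add_kronecker, kronecker_add, kronecker_add, one_kronecker_one]
      abel
    rw [rookAdj, kroneckerSum_mul_kroneckerSum, allOnes_sub_one_mul_self, hJ]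
    simp only [kroneckerSum, add_kronecker, kronecker_add, smul_kronecker, kronecker_smul,
      one_kronecker_one]
    module

end Rook

theorem IsSRGAdj.reindex {ι κ : Type*} [Fintype ι] [DecidableEq ι] [Fintype κ] [DecidableEq κ]
    {A : Matrix ι ι ℤ} {k l mu : ℤ} (h : IsSRGAdj A k l mu) (e : ι ≃ κ) :
    IsSRGAdj (reindex e e A) k l mu := by
  obtain ⟨hsymm, hdiag, h01, hsq⟩ := h
  refine ⟨hsymm.submatrix _, fun i => hdiag _, fun i j => h01 _ _, ?_⟩
  rw [reindex_apply, submatrix_mul_equiv, hsq, ← submatrix_one_equiv e.symm]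
  rfl

open Complex

def skewConferenceMatrix4 : Matrix (Fin 4) (Fin 4) ℂ :=
  !![0, 1, 1, 1; -1, 0, 1, -1; -1, -1, 0, 1; -1, 1, -1, 0]

def hermitianConferenceMatrix4 : Matrix (Fin 4) (Fin 4) ℂ :=
  !![0, 1, 1, 1; 1, 0, I, -I; 1, -I, 0, I; 1, I, -I, 0]

theorem conjTranspose_skewConferenceMatrix4 :
    skewConferenceMatrix4ᴴ = -skewConferenceMatrix4 := by
  ext i j; fin_cases i <;> fin_cases j <;> simp [skewConferenceMatrix4]

theorem isHermitian_hermitianConferenceMatrix4 : hermitianConferenceMatrix4.IsHermitian := by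
  ext i j; fin_cases i <;> fin_cases j <;> simp [hermitianConferenceMatrix4]

theorem skewConferenceMatrix4_mul_conjTranspose :
    skewConferenceMatrix4 * skewConferenceMatrix4ᴴ = (3 : ℂ) • 1 := by
  ext i j
  fin_cases i <;> fin_cases j <;>
    simp [skewConferenceMatrix4, mul_apply, Fin.sum_univ_four] <;> norm_num

theorem hermitianConferenceMatrix4_mul_conjTranspose :
    hermitianConferenceMatrix4 * hermitianConferenceMatrix4ᴴ = (3 : ℂ) • 1 := by
  ext i j
  fin_cases i <;> fin_cases j <;>
    simp [hermitianConferenceMatrix4, mul_apply, Fin.sum_univ_four] <;> norm_num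

theorem skewConferenceMatrix4_apply_eq_zero_iff (i j : Fin 4) :
    skewConferenceMatrix4 i j = 0 ↔ i = j := by
  fin_cases i <;> fin_cases j <;> simp [skewConferenceMatrix4]

theorem hermitianConferenceMatrix4_apply_eq_zero_iff (i j : Fin 4) :
    hermitianConferenceMatrix4 i j = 0 ↔ i = j := by
  fin_cases i <;> fin_cases j <;> simp [hermitianConferenceMatrix4]

theorem skewConferenceMatrix4_apply_mem (i j : Fin 4) :
    skewConferenceMatrix4 i j ∈ ({0, 1, -1, I, -I} : Set ℂ) := by
  fin_cases i <;> fin_cases j <;> simp [skewConferenceMatrix4]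

theorem hermitianConferenceMatrix4_apply_mem (i j : Fin 4) :
    hermitianConferenceMatrix4 i j ∈ ({0, 1, -1, I, -I} : Set ℂ) := by
  fin_cases i <;> fin_cases j <;> simp [hermitianConferenceMatrix4]

def signedRook4 : Matrix (Fin 4 × Fin 4) (Fin 4 × Fin 4) ℂ :=
  kroneckerSum hermitianConferenceMatrix4 skewConferenceMatrix4

theorem signedRook4_apply_mem (x y : Fin 4 × Fin 4) :
    signedRook4 x y ∈ ({0, 1, -1, I, -I} : Set ℂ) := by
  obtain ⟨a, b⟩ := x
  obtain ⟨a', b'⟩ := y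
  rw [signedRook4, kroneckerSum_apply_of_diag_eq_zero
    (fun a => (hermitianConferenceMatrix4_apply_eq_zero_iff a a).2 rfl)]
  split_ifs
  · exact skewConferenceMatrix4_apply_mem b b'
  · exact hermitianConferenceMatrix4_apply_mem a a'
  · simp

theorem signedRook4_mul_conjTranspose : signedRook4 * signedRook4ᴴ = (6 : ℂ) • 1 := by
  rw [signedRook4, kroneckerSum_mul_conjTranspose_self isHermitian_hermitianConferenceMatrix4
    conjTranspose_skewConferenceMatrix4, hermitianConferenceMatrix4_mul_conjTranspose,
    skewConferenceMatrix4_mul_conjTranspose, kroneckerSum_smul_one]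
  norm_num

theorem signedRook4_apply_eq_zero_iff (x y : Fin 4 × Fin 4) :
    signedRook4 x y = 0 ↔ rookAdj (Fin 4) x y = 0 := by
  rw [signedRook4, kroneckerSum_apply_eq_zero_iff hermitianConferenceMatrix4_apply_eq_zero_iff
    skewConferenceMatrix4_apply_eq_zero_iff, rookAdj_apply_eq_zero_iff]

theorem isSRGAdj_rookAdj_fin4 : IsSRGAdj (rookAdj (Fin 4)) 6 2 2 := by
  simpa using isSRGAdj_rookAdj (ι := Fin 4)

theorem stmt19 :
    ∃ W : Matrix (Fin 16) (Fin 16) ℂ,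
      ∃ A : Matrix (Fin 16) (Fin 16) ℤ,
      (∀ i j, W i j = 0 ∨ W i j = 1 ∨ W i j = -1 ∨
        W i j = Complex.I ∨ W i j = -Complex.I) ∧
      W * Wᴴ = (6 : ℂ) • 1 ∧
      (∀ i j, (W i j = 0 → A i j = 0) ∧ (W i j ≠ 0 → A i j = 1)) ∧
      IsSRGAdj A 6 2 2 := by
  let e : Fin 4 × Fin 4 ≃ Fin 16 := finProdFinEquiv
  refine ⟨reindex e e signedRook4, reindex e e (rookAdj (Fin 4)),
    fun i j => by simpa using signedRook4_apply_mem _ _, ?_, fun i j => ?_,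
    isSRGAdj_rookAdj_fin4.reindex e⟩
  · rw [reindex_apply, conjTranspose_submatrix, submatrix_mul_equiv,
      signedRook4_mul_conjTranspose, submatrix_smul, Pi.smul_apply, Pi.smul_apply,
      submatrix_one_equiv]
  · rcases isSRGAdj_rookAdj_fin4.2.2.1 (e.symm i) (e.symm j) with h | h <;>
      simp [signedRook4_apply_eq_zero_iff, h]
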